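/- arXiv:2603.17313 — 2 statements merged into one kernel-verified Lean document; each statement's English description precedes it below -/
import Mathlib

section
/- For every integer n and 0 < ε < 1/2 and every angle ϑ_y, the integral (-(1-ε)ε/π) ∫_{-π}^{π} e^{-inϑ} dϑ / ((1-2ε)cos(ϑ - ϑ_y) + 2(1-ε)ε - 1) equals (1-2ε)^{|n|} e^{-inϑ_y}. -/
/-!
With `r = 1 - 2ε` the denominator equals `-(1 - 2r cos (ϑ - ϑy) + r²) / 2` and
`(1 - ε) ε = (1 - r²) / 4`, so the constant times the integrand is `(2π)⁻¹ e^{-inϑ}` times the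
Poisson kernel of the unit disc at `w = r e^{iϑy}` evaluated at `e^{iϑ}`. Poisson's integral
formula for the holomorphic function `z ↦ z ^ m` gives the coefficients `r ^ m e^{imϑy}` for
`n = -m ≤ 0`; since the kernel is real, the coefficients for `n > 0` are their complex conjugates.
-/

open Complex intervalIntegral Metric
open scoped Real ComplexConjugate

lemma one_sub_two_mul_mul_cos_add_sq_pos {r : ℝ} (hr : |r| < 1) (θ : ℝ) :
    0 < 1 - 2 * r * Real.cos θ + r ^ 2 := by
  have hcos : r * Real.cos θ ≤ |r| := (le_abs_self _).trans <| by
    rw [abs_mul]; exact mul_le_of_le_one_right (abs_nonneg r) (Real.abs_cos_le_one θ)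
  nlinarith [sq_abs r, mul_pos (sub_pos.2 hr) (sub_pos.2 hr)]

lemma poissonKernel_zero_circleMap (r s θ : ℝ) :
    poissonKernel 0 (r * exp (s * I)) (circleMap 0 1 θ)
      = (1 - r ^ 2) / (1 - 2 * r * Real.cos (θ - s) + r ^ 2) := by
  simp only [circleMap_zero, ofReal_one, one_mul, poissonKernel_def, sub_zero,
    norm_exp_ofReal_mul_I, one_pow, Complex.norm_mul, norm_real, Real.norm_eq_abs, mul_one, sq_abs,
    ← normSq_eq_norm_sq, normSq_apply, sub_re, exp_ofReal_mul_I_re, mul_re, ofReal_re, ofReal_im,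
    exp_ofReal_mul_I_im, zero_mul, sub_im, mul_im, add_zero, Real.cos_sub]
  congr 1
  linear_combination Real.sin_sq_add_cos_sq θ + r ^ 2 * Real.sin_sq_add_cos_sq s

lemma integral_circleMap_pow_mul_poissonKernel {w : ℂ} (hw : w ∈ ball 0 1) (m : ℕ) :
    ∫ θ in (0 : ℝ)..2 * π, circleMap 0 1 θ ^ m * poissonKernel 0 w (circleMap 0 1 θ)
      = 2 * π * w ^ m := by
  have h := (differentiable_pow m).diffContOnCl.circleAverage_poissonKernel_smul hw
  rw [Real.circleAverage_def, inv_smul_eq_iff₀ (by positivity)] at h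
  simpa [mul_comm] using h

lemma periodic_exp_mul_poissonKernel_circleMap (n : ℤ) (w : ℂ) :
    Function.Periodic
      (fun θ : ℝ => exp (-n * I * θ) * poissonKernel 0 w (circleMap 0 1 θ)) (2 * π) := by
  intro θ
  have hexp : exp (-n * I * ↑(θ + 2 * π)) = exp (-n * I * θ) := by
    rw [← mul_one (exp (-n * I * θ)), ← exp_int_mul_two_pi_mul_I (-n), ← exp_add]
    push_cast
    ring_nf
  simp only [hexp, periodic_circleMap 0 1 θ]

lemma integral_exp_mul_poissonKernel {r : ℝ} (hr : |r| < 1) (s t : ℝ) (n : ℤ) :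
    ∫ θ in t..t + 2 * π,
        exp (-n * I * θ) * poissonKernel 0 (r * exp (s * I)) (circleMap 0 1 θ)
      = 2 * π * r ^ n.natAbs * exp (-n * I * s) := by
  rw [(periodic_exp_mul_poissonKernel_circleMap n _).intervalIntegral_add_eq t 0, zero_add]
  have hw : (r : ℂ) * exp (s * I) ∈ ball 0 1 := by simpa using hr
  have hpow (m : ℕ) : ∫ θ in (0 : ℝ)..2 * π,
      exp (m * I * θ) * poissonKernel 0 (r * exp (s * I)) (circleMap 0 1 θ)
        = 2 * π * r ^ m * exp (m * I * s) := by
    refine (integral_congr fun θ _ => ?_).trans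
      ((integral_circleMap_pow_mul_poissonKernel hw m).trans ?_)
    · simp only [circleMap_zero, ofReal_one, one_mul, ← exp_nat_mul]; ring_nf
    · rw [mul_pow, ← exp_nat_mul]; ring_nf
  obtain ⟨m, rfl | rfl⟩ := Int.eq_nat_or_neg n
  · -- the kernel is real, so conjugating the coefficient of `-m` gives that of `m`
    have h := congrArg conj (hpow m)
    rw [← intervalIntegral_conj] at h
    convert h using 1
    · simp [← exp_conj]
    · simp [← exp_conj, map_ofNat]
  · simpa using hpow m

/-- The Fourier multiplier integral:
`(-(1-ε)ε/π) ∫_{-π}^{π} e^{-inϑ} dϑ / ((1-2ε)cos(ϑ-ϑ_y) + 2(1-ε)ε - 1)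
 = (1-2ε)^{|n|} e^{-inϑ_y}`. -/
theorem stmt_7 (ε : ℝ) (hε : 0 < ε) (hε2 : ε < 1 / 2) (n : ℤ) (ϑy : ℝ) :
    ((-(1 - ε) * ε / Real.pi : ℝ) : ℂ) *
        ∫ ϑ in (-Real.pi)..Real.pi,
          Complex.exp (-(n : ℂ) * Complex.I * (ϑ : ℂ)) /
            ((((1 - 2 * ε) * Real.cos (ϑ - ϑy) + 2 * (1 - ε) * ε - 1 : ℝ)) : ℂ)
      = (((1 - 2 * ε) ^ n.natAbs : ℝ) : ℂ) * Complex.exp (-(n : ℂ) * Complex.I * (ϑy : ℂ)) := by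
  set r := 1 - 2 * ε
  have hr : |r| < 1 := abs_lt.2 ⟨by linarith, by linarith⟩
  set P := fun ϑ : ℝ => poissonKernel 0 (r * exp (ϑy * I)) (circleMap 0 1 ϑ)
  have hkernel (ϑ : ℝ) : -(1 - ε) * ε / π / (r * Real.cos (ϑ - ϑy) + 2 * (1 - ε) * ε - 1)
      = (2 * π)⁻¹ * P ϑ := by
    have hD : r * Real.cos (ϑ - ϑy) + 2 * (1 - ε) * ε - 1
        = -(1 - 2 * r * Real.cos (ϑ - ϑy) + r ^ 2) / 2 := by ring
    have hpos := one_sub_two_mul_mul_cos_add_sq_pos hr (ϑ - ϑy)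
    simp only [P, poissonKernel_zero_circleMap, hD]
    field_simp
    ring
  have hfourier := integral_exp_mul_poissonKernel hr ϑy (-π) n
  rw [show -π + 2 * π = π by ring] at hfourier
  calc _ = ∫ ϑ in -π..π, (2 * π : ℂ)⁻¹ * (exp (-n * I * ϑ) * P ϑ) := by
        rw [← integral_const_mul]
        refine integral_congr fun ϑ _ => ?_
        have h := congrArg ofReal (hkernel ϑ)
        push_cast at h ⊢
        linear_combination exp (-n * I * ϑ) * h
    _ = _ := by
      rw [integral_const_mul, hfourier]
      push_cast
      field_simp
end

section
/- For α = 1, the function v_{ε,1}(ρ) = ½(Li₂(1-2ε) - Li₂(1-2ρ)) satisfies the expansion v_{ε,1}(ρ) = ρ(-log ρ + 1 - log 2) + ε(log ε - 1 + log 2) + O(ρ² log ρ) + O(ε² log ε) as ρ, ε → 0, where Li₂ is the dilogarithm. In particular, for fixed ρ ∈ (0, 1/2), lim_{ε→0⁺} v_{ε,1}(ρ) = ½(Li₂(1) - Li₂(1-2ρ)) = ½(π²/6 - Li₂(1-2ρ)) is finite. -/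
/-- The dilogarithm Li₂(z) = Σ_{k≥1} zᵏ/k². -/
noncomputable def Li2 (z : ℝ) : ℝ := ∑' k : ℕ, z ^ (k + 1) / ((k : ℝ) + 1) ^ 2

/-- The exact mean escape time profile for the gas giant of order α = 1. -/
noncomputable def v1 (ε ρ : ℝ) : ℝ := (1 / 2) * (Li2 (1 - 2 * ε) - Li2 (1 - 2 * ρ))

/-!
Write `h t = t (1 - log 2 - log t)`, so that the leading terms are `h ρ - h ε`. Since
`d/dt Li₂(1 - 2t) = 2 log (2t) / (1 - 2t)`, the error `v1 ε ρ - (h ρ - h ε)` is the increment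
between `ε` and `ρ` of `v1Error = -½ Li₂(1 - 2t) - h t`, whose derivative is
`2t log (2t) / (2t - 1) = O(-t log t)`.
As `-t log t` increases on `(0, 1/e]`, the mean value theorem bounds the error by
`4 (-ρ log ρ) (ρ - ε) ≤ 4 ρ² |log ρ|`. The limit as `ε → 0⁺` is continuity of `Li₂` at `1`,
where `Li₂ 1 = ζ(2) = π²/6`.
-/

open Real Set Filter Topology

theorem hasSum_one_div_succ_sq : HasSum (fun k : ℕ => 1 / ((k : ℝ) + 1) ^ 2) (π ^ 2 / 6) := by
  have h := (hasSum_nat_add_iff' (f := fun n : ℕ => (1 : ℝ) / (n : ℝ) ^ 2) 1).mpr hasSum_zeta_two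
  simpa using h

theorem norm_Li2_term_le {z : ℝ} (hz : |z| ≤ 1) (k : ℕ) :
    ‖z ^ (k + 1) / ((k : ℝ) + 1) ^ 2‖ ≤ 1 / ((k : ℝ) + 1) ^ 2 := by
  rw [norm_div, norm_pow, Real.norm_eq_abs, norm_of_nonneg (by positivity)]
  gcongr
  exact pow_le_one₀ (abs_nonneg z) hz

theorem Li2_one : Li2 1 = π ^ 2 / 6 := by
  simpa [Li2] using hasSum_one_div_succ_sq.tsum_eq

theorem continuousOn_Li2 : ContinuousOn Li2 (Icc (-1) 1) :=
  continuousOn_tsum (fun k => (continuousOn_pow (k + 1)).div_const _)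
    hasSum_one_div_succ_sq.summable fun k _ hz => norm_Li2_term_le (abs_le.mpr hz) k

theorem hasDerivAt_Li2 {z : ℝ} (hz : |z| < 1) (hz0 : z ≠ 0) :
    HasDerivAt Li2 (-log (1 - z) / z) z := by
  obtain ⟨b, hzb, hb1⟩ := exists_between hz
  have hseries : HasDerivAt Li2 (∑' k : ℕ, z ^ k / ((k : ℝ) + 1)) z := by
    refine hasDerivAt_tsum_of_isPreconnected
      (summable_geometric_of_lt_one ((abs_nonneg z).trans hzb.le) hb1)
      isOpen_Ioo (convex_Ioo (-b) b).isPreconnected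
      (g' := fun (k : ℕ) (y : ℝ) => y ^ k / ((k : ℝ) + 1)) (fun k y _ => ?_) (fun k y hy => ?_)
      (abs_lt.mp hzb) (hasSum_one_div_succ_sq.summable.of_norm_bounded
        (norm_Li2_term_le hz.le)) (abs_lt.mp hzb)
    · refine ((hasDerivAt_pow (k + 1) y).div_const (((k : ℝ) + 1) ^ 2)).congr_deriv ?_
      push_cast
      field_simp
    · rw [norm_div, norm_pow, Real.norm_eq_abs, norm_of_nonneg (by positivity)]
      calc |y| ^ k / ((k : ℝ) + 1) ≤ |y| ^ k := div_le_self (by positivity) (by simp)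
        _ ≤ b ^ k := pow_le_pow_left₀ (abs_nonneg y) (abs_le.mpr ⟨hy.1.le, hy.2.le⟩) k
  have hterm (k : ℕ) : z ^ (k + 1) / ((k : ℝ) + 1) / z = z ^ k / ((k : ℝ) + 1) := by
    field_simp
    ring
  have hsum := (hasSum_pow_div_log_of_abs_lt_one hz).div_const z
  simp only [hterm] at hsum
  exact hseries.congr_deriv hsum.tsum_eq

theorem hasDerivAt_Li2_one_sub_two_mul {t : ℝ} (ht : 0 < t) (ht' : t < 1 / 2) :
    HasDerivAt (fun t => Li2 (1 - 2 * t)) (2 * log (2 * t) / (1 - 2 * t)) t := by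
  have hz : |1 - 2 * t| < 1 := abs_lt.mpr ⟨by linarith, by linarith⟩
  refine ((hasDerivAt_Li2 hz (by linarith)).comp t
    (((hasDerivAt_id t).const_mul 2).const_sub 1)).congr_deriv ?_
  rw [sub_sub_cancel]
  ring

theorem monotoneOn_negMulLog : MonotoneOn negMulLog (Icc 0 (exp (-1))) := by
  refine monotoneOn_of_deriv_nonneg (convex_Icc _ _) continuous_negMulLog.continuousOn
    (fun x hx => ?_) fun x hx => ?_
  all_goals rw [interior_Icc] at hx
  · exact (differentiableAt_negMulLog_iff.mpr hx.1.ne').differentiableWithinAt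
  · rw [deriv_negMulLog hx.1.ne']
    have : log x < -1 := (log_lt_iff_lt_exp hx.1).mpr hx.2
    linarith

noncomputable def v1Error (t : ℝ) : ℝ :=
  -(1 / 2) * Li2 (1 - 2 * t) - (negMulLog t + (1 - log 2) * t)

theorem v1_sub_eq_v1Error_sub (ε ρ : ℝ) :
    v1 ε ρ - (ρ * (-log ρ + 1 - log 2) + ε * (log ε - 1 + log 2)) = v1Error ρ - v1Error ε := by
  simp only [v1, v1Error, negMulLog]
  ring

theorem hasDerivAt_v1Error {t : ℝ} (ht : 0 < t) (ht' : t < 1 / 2) :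
    HasDerivAt v1Error (2 * t * log (2 * t) / (2 * t - 1)) t := by
  refine (((hasDerivAt_Li2_one_sub_two_mul ht ht').const_mul (-(1 / 2))).sub
    ((hasDerivAt_negMulLog ht.ne').add ((hasDerivAt_id t).const_mul (1 - log 2)))).congr_deriv ?_
  have : 1 - 2 * t ≠ 0 := by linarith
  have : 2 * t - 1 ≠ 0 := by linarith
  rw [log_mul two_ne_zero ht.ne']
  field_simp
  ring

theorem abs_deriv_v1Error_le {t : ℝ} (ht : 0 < t) (ht' : t ≤ 1 / 4) :
    |2 * t * log (2 * t) / (2 * t - 1)| ≤ 4 * negMulLog t := by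
  have hlog : log (2 * t) ≤ 0 := log_nonpos (by positivity) (by linarith)
  have hlog_le : log t ≤ log (2 * t) := log_le_log ht (by linarith)
  rw [abs_div, abs_of_nonpos (by nlinarith), abs_of_neg (by linarith), negMulLog,
    div_le_iff₀ (by linarith)]
  have hneg : 0 ≤ -log t := by linarith
  nlinarith [mul_le_mul_of_nonneg_left hlog_le ht.le, mul_nonneg ht.le hneg]

theorem abs_v1_sub_le {ε ρ : ℝ} (hε : 0 < ε) (hερ : ε ≤ ρ) (hρ : ρ ≤ 1 / 4) :
    |v1 ε ρ - (ρ * (-log ρ + 1 - log 2) + ε * (log ε - 1 + log 2))| ≤ 4 * ρ ^ 2 * |log ρ| := by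
  have hρ0 : 0 < ρ := hε.trans_le hερ
  have hexp : 1 / 4 ≤ exp (-1) := le_trans (by norm_num) exp_neg_one_gt_d9.le
  have hderiv : ∀ t ∈ Icc ε ρ, ‖2 * t * log (2 * t) / (2 * t - 1)‖ ≤ 4 * negMulLog ρ := by
    intro t ht
    have ht0 : 0 < t := hε.trans_le ht.1
    calc ‖2 * t * log (2 * t) / (2 * t - 1)‖ ≤ 4 * negMulLog t :=
          abs_deriv_v1Error_le ht0 (ht.2.trans hρ)
      _ ≤ 4 * negMulLog ρ := by
          gcongr
          exact monotoneOn_negMulLog ⟨ht0.le, by linarith [ht.2]⟩ ⟨hρ0.le, by linarith⟩ ht.2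
  have hmvt := Convex.norm_image_sub_le_of_norm_hasDerivWithin_le
    (fun t ht => (hasDerivAt_v1Error (hε.trans_le ht.1) (by linarith [ht.2])).hasDerivWithinAt)
    hderiv (convex_Icc ε ρ) (left_mem_Icc.mpr hερ) (right_mem_Icc.mpr hερ)
  have hlog : log ρ ≤ 0 := log_nonpos hρ0.le (by linarith)
  rw [Real.norm_eq_abs, Real.norm_eq_abs, abs_of_nonneg (sub_nonneg.mpr hερ), negMulLog] at hmvt
  rw [v1_sub_eq_v1Error_sub, abs_of_nonpos hlog]
  nlinarith [mul_le_mul_of_nonneg_left hε.le (mul_nonneg hρ0.le (neg_nonneg.mpr hlog))]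

theorem tendsto_v1_nhdsGT_zero (ρ : ℝ) :
    Tendsto (fun ε => v1 ε ρ) (𝓝[>] 0) (𝓝 ((1 / 2) * (π ^ 2 / 6 - Li2 (1 - 2 * ρ)))) := by
  have hmap : Tendsto (fun ε : ℝ => 1 - 2 * ε) (𝓝[>] 0) (𝓝[Icc (-1) 1] 1) := by
    refine tendsto_nhdsWithin_iff.mpr ⟨?_, ?_⟩
    · have : Continuous fun ε : ℝ => 1 - 2 * ε := by fun_prop
      simpa using this.continuousWithinAt.tendsto (x := 0) (s := Ioi 0)
    · filter_upwards [Ioo_mem_nhdsGT (zero_lt_one' ℝ)] with ε hε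
      exact ⟨by linarith [hε.2], by linarith [hε.1]⟩
  have hLi2 := (continuousOn_Li2 1 (by norm_num)).tendsto.comp hmap
  rw [Li2_one] at hLi2
  exact (hLi2.sub_const _).const_mul _

/-- Expansion of v_{ε,1} near ρ, ε = 0 and the finite limit ½(π²/6 - Li₂(1-2ρ))
as ε → 0⁺ for fixed ρ ∈ (0,1/2). -/
theorem stmt_14 :
    (∃ C r : ℝ, 0 < C ∧ 0 < r ∧ ∀ ρ ε : ℝ, 0 < ε → ε ≤ ρ → ρ ≤ r →
      |v1 ε ρ - (ρ * (-Real.log ρ + 1 - Real.log 2)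
          + ε * (Real.log ε - 1 + Real.log 2))|
        ≤ C * ρ ^ 2 * |Real.log ρ| + C * ε ^ 2 * |Real.log ε|) ∧
    (∀ ρ : ℝ, 0 < ρ → ρ < 1 / 2 →
      Filter.Tendsto (fun ε => v1 ε ρ) (nhdsWithin 0 (Set.Ioi 0))
        (nhds ((1 / 2) * (Real.pi ^ 2 / 6 - Li2 (1 - 2 * ρ))))) := by
  refine ⟨⟨4, 1 / 4, by norm_num, by norm_num, fun ρ ε hε hερ hρ => ?_⟩,
    fun ρ _ _ => tendsto_v1_nhdsGT_zero ρ⟩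
  have : 0 ≤ 4 * ε ^ 2 * |Real.log ε| := by positivity
  linarith [abs_v1_sub_le hε hερ hρ]
end
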